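/- arXiv:1502.02743 — 2 statements merged into one kernel-verified Lean document; each statement's English description precedes it below -/
import Mathlib

section
/- For Re(a) > 0, Re(s) > 1, n a nonnegative integer with 2n < Re(s): ∫₀^∞ e^{−aw} w^{s−2n−1} L_{2n}^{s−2n−1}(aw) / (e^w − 1) dw = Σ_{j=0}^{2n} (−1)^j Γ(s) a^j / ((2n−j)! j! Γ(s−2n+j)) · Γ(s−2n+j) ζ(s−2n+j, a+1), i.e. equals Σ_{j=0}^{2n} (−1)^j Γ(s) a^j ζ(s−2n+j, a+1) / ((2n−j)! j!) when appropriately normalized. -/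
/-!
Expanding the Laguerre polynomial turns the integrand into a combination of the functions
`w ^ (z - 1) * exp (-a * w) / (exp w - 1)` with `z = s - 2n + j`, and the factor
`Γ(s - 2n + j)` in the Laguerre coefficients cancels the one in
`∫₀^∞ w ^ (z - 1) e^{-a w} / (e^w - 1) dw = Γ(z) ζ(z, a + 1)`.
That identity comes from expanding `1 / (e^w - 1)` as a geometric series and integrating
termwise against `∫₀^∞ t ^ (z - 1) e^{-c t} dt = Γ(z) c ^ (-z)`, which holds for complex `c`
with `0 < re c` by analytic continuation from the positive reals.
-/

open Real Complex MeasureTheory Set Finset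

/-- Hurwitz zeta in the series range. -/
noncomputable def zetaSeries (s a : ℂ) : ℂ := ∑' n : ℕ, (a + n) ^ (-s)

/-- Generalized (associated) Laguerre polynomial with complex parameter. -/
noncomputable def laguerre (n : ℕ) (k x : ℂ) : ℂ :=
  ∑ j ∈ Finset.range (n + 1),
    (-1) ^ j * Complex.Gamma (n + k + 1) /
      (Complex.Gamma (k + j + 1) * (Nat.factorial (n - j) : ℂ) * (Nat.factorial j : ℂ)) * x ^ j

open Filter Topology

lemma norm_cpow_mul_cexp_neg_mul (s c : ℂ) {t : ℝ} (ht : 0 < t) :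
    ‖(t : ℂ) ^ (s - 1) * cexp (-c * t)‖ = t ^ (s.re - 1) * rexp (-(c.re * t)) := by
  rw [norm_mul, norm_cpow_eq_rpow_re_of_pos ht, norm_exp]
  simp

lemma integrableOn_rpow_mul_exp_neg_mul {b r : ℝ} (hb : -1 < b) (hr : 0 < r) :
    IntegrableOn (fun t : ℝ => t ^ b * rexp (-(r * t))) (Ioi 0) := by
  simpa using integrableOn_rpow_mul_exp_neg_mul_rpow hb one_pos hr

lemma continuousOn_cpow_mul_cexp_neg_mul (s c : ℂ) :
    ContinuousOn (fun t : ℝ => (t : ℂ) ^ (s - 1) * cexp (-c * t)) (Ioi 0) := by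
  refine ContinuousOn.mul (fun t ht => ?_) (by fun_prop)
  exact ((continuousAt_cpow_const (ofReal_mem_slitPlane.2 ht)).comp
    continuous_ofReal.continuousAt).continuousWithinAt

lemma integrableOn_cpow_mul_cexp_neg_mul {s c : ℂ} (hs : 0 < s.re) (hc : 0 < c.re) :
    IntegrableOn (fun t : ℝ => (t : ℂ) ^ (s - 1) * cexp (-c * t)) (Ioi 0) := by
  refine Integrable.congr' (integrableOn_rpow_mul_exp_neg_mul (b := s.re - 1) (by linarith) hc)
    ((continuousOn_cpow_mul_cexp_neg_mul s c).aestronglyMeasurable measurableSet_Ioi) ?_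
  filter_upwards [self_mem_ae_restrict measurableSet_Ioi] with t (ht : 0 < t)
  rw [norm_cpow_mul_cexp_neg_mul s c ht, norm_of_nonneg (by positivity)]

lemma differentiableOn_integral_cpow_mul_cexp_neg_mul {s : ℂ} (hs : 0 < s.re) :
    DifferentiableOn ℂ
      (fun c : ℂ => ∫ t in Ioi (0 : ℝ), (t : ℂ) ^ (s - 1) * cexp (-c * t)) {c | 0 < c.re} := by
  intro c (hc : 0 < c.re)
  have hball : ∀ z ∈ Metric.ball c (c.re / 2), c.re / 2 < z.re := fun z hz => by
    have := (abs_re_le_norm (z - c)).trans_lt (mem_ball_iff_norm.mp hz)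
    rw [sub_re, abs_lt] at this
    linarith
  refine (hasDerivAt_integral_of_dominated_loc_of_deriv_le
    -- the exponent `s + 1 - 1` lets `norm_cpow_mul_cexp_neg_mul` bound the derivative
    (F' := fun z t => -((t : ℂ) ^ (s + 1 - 1) * cexp (-z * t)))
    (bound := fun t => t ^ ((s + 1).re - 1) * rexp (-(c.re / 2 * t)))
    (Metric.ball_mem_nhds c (half_pos hc))
    (Eventually.of_forall fun z =>
      (continuousOn_cpow_mul_cexp_neg_mul s z).aestronglyMeasurable measurableSet_Ioi)
    (integrableOn_cpow_mul_cexp_neg_mul hs hc)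
    ((continuousOn_cpow_mul_cexp_neg_mul (s + 1) c).neg.aestronglyMeasurable measurableSet_Ioi)
    ?_ (integrableOn_rpow_mul_exp_neg_mul (by rw [add_re, one_re]; linarith) (half_pos hc)) ?_
    ).2.differentiableAt.differentiableWithinAt
  · filter_upwards [self_mem_ae_restrict measurableSet_Ioi] with t (ht : 0 < t) z hz
    rw [norm_neg, norm_cpow_mul_cexp_neg_mul _ _ ht]
    gcongr
    nlinarith [hball z hz]
  · filter_upwards [self_mem_ae_restrict measurableSet_Ioi] with t (ht : 0 < t) z _
    have hpow : (t : ℂ) ^ (s + 1 - 1) = (t : ℂ) ^ (s - 1) * t := by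
      rw [show s + 1 - 1 = (s - 1) + 1 by ring, cpow_add _ _ (ofReal_ne_zero.2 ht.ne'), cpow_one]
    have hlin : HasDerivAt (fun y : ℂ => -y * t) (-t) z := by
      simpa using (hasDerivAt_id z).neg.mul_const (t : ℂ)
    rw [show -((t : ℂ) ^ (s + 1 - 1) * cexp (-z * t)) = (t : ℂ) ^ (s - 1) * (cexp (-z * t) * -t)
      by rw [hpow]; ring]
    exact hlin.cexp.const_mul _

lemma integral_cpow_mul_cexp_neg_mul_Ioi {s c : ℂ} (hs : 0 < s.re) (hc : 0 < c.re) :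
    ∫ t in Ioi (0 : ℝ), (t : ℂ) ^ (s - 1) * cexp (-c * t) = Gamma s * c ^ (-s) := by
  have hU : IsOpen {c : ℂ | 0 < c.re} := isOpen_lt continuous_const continuous_re
  have hG : DifferentiableOn ℂ (fun c : ℂ => Gamma s * c ^ (-s)) {c | 0 < c.re} :=
    fun z (hz : 0 < z.re) => ((differentiableAt_id.cpow_const (Or.inl hz)).const_mul _
      ).differentiableWithinAt
  have hreal : Tendsto ((↑) : ℝ → ℂ) (𝓝[≠] 1) (𝓝[≠] 1) := by
    rw [tendsto_nhdsWithin_iff]; constructor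
    · exact tendsto_nhdsWithin_of_tendsto_nhds continuous_ofReal.continuousAt
    · exact eventually_nhdsWithin_iff.mpr (Eventually.of_forall fun t ht => ofReal_ne_one.mpr ht)
  have hF := (differentiableOn_integral_cpow_mul_cexp_neg_mul hs).analyticOnNhd hU
  refine hF.eqOn_of_preconnected_of_frequently_eq (hG.analyticOnNhd hU)
    (convex_halfSpace_re_gt 0).isPreconnected (by simp : (1 : ℂ) ∈ _)
    (hreal.frequently ?_) hc
  refine ((Eventually.filter_mono nhdsWithin_le_nhds) ?_).frequently
  filter_upwards [eventually_gt_nhds zero_lt_one] with r hr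
  simp only [neg_mul]
  rw [integral_cpow_mul_exp_neg_mul_Ioi hs hr, one_div,
    inv_cpow _ _ (by rw [arg_ofReal_of_nonneg hr.le]; exact pi_pos.ne), cpow_neg, mul_comm]

lemma hasSum_cexp_neg_add_nat_mul (a : ℂ) {w : ℝ} (hw : 0 < w) :
    HasSum (fun m : ℕ => cexp (-(a + 1 + m) * w)) (cexp (-a * w) / (cexp w - 1)) := by
  have hq : ‖cexp (-w)‖ < 1 := by
    rw [norm_exp, neg_re, ofReal_re, Real.exp_lt_one_iff]; linarith
  have hterm : ∀ m : ℕ, cexp (-(a + 1) * w) * cexp (-w) ^ m = cexp (-(a + 1 + m) * w) :=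
    fun m => by rw [← Complex.exp_nat_mul, ← Complex.exp_add]; ring_nf
  have hlim : cexp (-(a + 1) * w) * (1 - cexp (-w))⁻¹ = cexp (-a * w) / (cexp w - 1) := by
    have hne : cexp w - 1 ≠ 0 := by
      rw [sub_ne_zero, ← ofReal_exp, ← ofReal_one, ne_eq, ofReal_inj, Real.exp_eq_one_iff]
      exact hw.ne'
    rw [show -(a + 1) * w = -a * w + -w by ring, Complex.exp_add, Complex.exp_neg]
    field_simp
  simpa only [hterm, hlim] using
    (hasSum_geometric_of_norm_lt_one hq).mul_left (cexp (-(a + 1) * w))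

lemma integrableOn_cpow_mul_cexp_neg_mul_div_cexp_sub_one {z a : ℂ} (hz : 1 < z.re)
    (ha : 0 < a.re) :
    IntegrableOn (fun w : ℝ => (w : ℂ) ^ (z - 1) * cexp (-a * w) / (cexp w - 1)) (Ioi 0) := by
  have hden : ∀ w : ℝ, 0 < w → ‖cexp w - 1‖ = rexp w - 1 := fun w hw => by
    rw [← ofReal_exp, ← ofReal_one, ← ofReal_sub, norm_real, Real.norm_eq_abs,
      abs_of_nonneg (by linarith [Real.add_one_le_exp w])]
  refine (integrableOn_rpow_mul_exp_neg_mul (b := z.re - 2) (by linarith) ha).mono' ?_ ?_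
  · refine ((continuousOn_cpow_mul_cexp_neg_mul z a).div (by fun_prop) fun w (hw : 0 < w) => ?_
      ).aestronglyMeasurable measurableSet_Ioi
    rw [← norm_ne_zero_iff, hden w hw]
    linarith [Real.add_one_le_exp w]
  · filter_upwards [self_mem_ae_restrict measurableSet_Ioi] with w (hw : 0 < w)
    rw [norm_div, norm_cpow_mul_cexp_neg_mul z a hw, hden w hw]
    calc w ^ (z.re - 1) * rexp (-(a.re * w)) / (rexp w - 1)
        ≤ w ^ (z.re - 1) * rexp (-(a.re * w)) / w :=
          div_le_div_of_nonneg_left (by positivity) hw (by linarith [Real.add_one_le_exp w])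
      _ = w ^ (z.re - 2) * rexp (-(a.re * w)) := by
          rw [show z.re - 2 = z.re - 1 - 1 by ring, Real.rpow_sub_one hw.ne' (z.re - 1),
            div_mul_eq_mul_div]

lemma integral_cpow_mul_cexp_neg_mul_div_cexp_sub_one {z a : ℂ} (hz : 1 < z.re)
    (ha : 0 < a.re) :
    ∫ w in Ioi (0 : ℝ), (w : ℂ) ^ (z - 1) * cexp (-a * w) / (cexp w - 1) =
      Gamma z * zetaSeries z (a + 1) := by
  set f : ℕ → ℝ → ℂ := fun m w => (w : ℂ) ^ (z - 1) * cexp (-(a + 1 + m) * w)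
  have hre : ∀ m : ℕ, 0 < (a + 1 + m).re := fun m => by
    rw [add_re, add_re, one_re, natCast_re]; positivity
  have hnorm : ∀ m : ℕ,
      ∫ w in Ioi 0, ‖f m w‖ = (1 / (a.re + 1 + m)) ^ z.re * Real.Gamma z.re := fun m => by
      rw [← integral_rpow_mul_exp_neg_mul_Ioi (by linarith) (by positivity)]
      refine setIntegral_congr_fun measurableSet_Ioi fun w (hw : 0 < w) => ?_
      rw [norm_cpow_mul_cexp_neg_mul _ _ hw]
      simp
  have hsum : Summable fun m : ℕ => ∫ w in Ioi 0, ‖f m w‖ := by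
    simp_rw [hnorm]
    refine Summable.mul_right _ (((Real.summable_one_div_nat_add_rpow (a.re + 1) z.re).2 hz).congr
      fun m => ?_)
    rw [abs_of_pos (by positivity), Real.div_rpow zero_le_one (by positivity), Real.one_rpow,
      add_comm (m : ℝ)]
  calc ∫ w in Ioi (0 : ℝ), (w : ℂ) ^ (z - 1) * cexp (-a * w) / (cexp w - 1)
      = ∫ w in Ioi 0, ∑' m, f m w := setIntegral_congr_fun measurableSet_Ioi fun w hw =>
        by rw [mul_div_assoc, ((hasSum_cexp_neg_add_nat_mul a hw).mul_left _).tsum_eq]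
    _ = ∑' m, ∫ w in Ioi 0, f m w := (integral_tsum_of_summable_integral_norm
        (fun m => integrableOn_cpow_mul_cexp_neg_mul (by linarith) (hre m)) hsum).symm
    _ = Gamma z * zetaSeries z (a + 1) := by
        simp_rw [f, integral_cpow_mul_cexp_neg_mul_Ioi (by linarith : 0 < z.re) (hre _),
          tsum_mul_left, zetaSeries]

lemma cpow_mul_laguerre (n : ℕ) (k a : ℂ) {w : ℝ} (hw : 0 < w) :
    (w : ℂ) ^ k * laguerre n k (a * w) =
      ∑ j ∈ range (n + 1), (-1) ^ j * Gamma (n + k + 1) * a ^ j /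
        (Gamma (k + j + 1) * (n - j).factorial * j.factorial) * (w : ℂ) ^ (k + j) := by
  rw [laguerre, Finset.mul_sum]
  refine Finset.sum_congr rfl fun j _ => ?_
  rw [cpow_add _ _ (ofReal_ne_zero.2 hw.ne'), cpow_natCast, mul_pow]
  ring

theorem stmt_7 (n : ℕ) (a s : ℂ) (ha : 0 < a.re) (hs : (2 * n : ℝ) + 1 < s.re) :
    ∫ w in Ioi (0 : ℝ),
        Complex.exp (-a * w) * (w : ℂ) ^ (s - 2 * n - 1) *
          laguerre (2 * n) (s - 2 * n - 1) (a * w) / (Complex.exp w - 1) =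
      ∑ j ∈ Finset.range (2 * n + 1),
        (-1) ^ j * Complex.Gamma s * a ^ j * zetaSeries (s - 2 * n + j) (a + 1) /
          ((Nat.factorial (2 * n - j) : ℂ) * (Nat.factorial j : ℂ)) := by
  have hre : ∀ j : ℕ, 1 < (s - 2 * n + j).re := fun j => by
    have : (s - 2 * n + j).re = s.re - 2 * n + j := by simp
    linarith [j.cast_nonneg (α := ℝ)]
  set c : ℕ → ℂ := fun j => (-1) ^ j * Gamma s * a ^ j /
    (Gamma (s - 2 * n + j) * (2 * n - j).factorial * j.factorial)
  calc _ = ∫ w in Ioi (0 : ℝ), ∑ j ∈ range (2 * n + 1),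
        c j * ((w : ℂ) ^ (s - 2 * n + j - 1) * cexp (-a * w) / (cexp w - 1)) :=
        setIntegral_congr_fun measurableSet_Ioi fun w hw => by
          rw [mul_assoc (cexp _), cpow_mul_laguerre _ _ _ hw, Finset.mul_sum, Finset.sum_div]
          refine Finset.sum_congr rfl fun j _ => ?_
          rw [show ((2 * n : ℕ) : ℂ) + (s - 2 * n - 1) + 1 = s by push_cast; ring,
            show s - 2 * n - 1 + j + 1 = s - 2 * n + j by ring,
            show s - 2 * n - 1 + j = s - 2 * n + j - 1 by ring]
          ring
    _ = ∑ j ∈ range (2 * n + 1),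
          c j * (Gamma (s - 2 * n + j) * zetaSeries (s - 2 * n + j) (a + 1)) := by
        rw [integral_finsetSum _ fun j _ =>
          (integrableOn_cpow_mul_cexp_neg_mul_div_cexp_sub_one (hre j) ha).const_mul _]
        simp_rw [integral_const_mul, integral_cpow_mul_cexp_neg_mul_div_cexp_sub_one (hre _) ha]
    _ = _ := Finset.sum_congr rfl fun j _ => by
        have := Gamma_ne_zero_of_re_pos (zero_lt_one.trans (hre j))
        simp only [c]
        field_simp
end

section
/- For w ≥ 0 and β > 0, ∫₀^∞ cos(wt)/cosh(βt) dt = π/(2β cosh(πw/(2β))). -/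
open Real MeasureTheory Set

/-!
The logistic substitution `p = eᵘ / (1 + eᵘ)` turns Euler's Beta integral into
`B(a, b) = ∫ e^{au} / (1 + eᵘ)^{a + b} du` over the whole line; for `b = 1 - a` the reflection
formula `Γ(a) Γ(1 - a) = π / sin (π a)` evaluates it. Putting `u = 2βt` and
`a = 1/2 + i w / (2β)` turns the integrand into `e^{iwt} / (2 cosh (βt))`, whose real part is even,
so the integral over `(0, ∞)` is half of the real part.
-/

lemma ofReal_exp_cpow (u : ℝ) (z : ℂ) : (rexp u : ℂ) ^ z = Complex.exp (u * z) := by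
  rw [Complex.cpow_def_of_ne_zero (by exact_mod_cast (exp_pos u).ne'),
    ← Complex.ofReal_log (exp_pos u).le, log_exp]

noncomputable def logistic (u : ℝ) : ℝ := rexp u / (1 + rexp u)

lemma image_logistic : logistic '' univ = Ioo 0 1 := by
  ext p
  simp only [image_univ, mem_range, mem_Ioo, logistic]
  constructor
  · rintro ⟨u, rfl⟩
    have := exp_pos u
    exact ⟨by positivity, by rw [div_lt_one (by positivity)]; linarith⟩
  · rintro ⟨hp0, hp1⟩
    refine ⟨log (p / (1 - p)), ?_⟩
    rw [exp_log (div_pos hp0 (by linarith))]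
    field_simp
    ring

lemma strictMono_logistic : StrictMono logistic := by
  intro u v huv
  have := exp_lt_exp.2 huv
  rw [logistic, logistic, div_lt_div_iff₀ (by positivity) (by positivity)]
  nlinarith

lemma hasDerivAt_logistic (u : ℝ) :
    HasDerivAt logistic (rexp u / (1 + rexp u) ^ 2) u := by
  refine ((hasDerivAt_exp u).div ((hasDerivAt_exp u).const_add 1) (by positivity)).congr_deriv ?_
  ring

theorem betaIntegral_eq_integral_exp (a b : ℂ) :
    Complex.betaIntegral a b =
      ∫ u : ℝ, Complex.exp (a * u) / (1 + Complex.exp u) ^ (a + b) := by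
  have key := integral_image_eq_integral_abs_deriv_smul MeasurableSet.univ
    (fun u _ => (hasDerivAt_logistic u).hasDerivWithinAt) strictMono_logistic.injective.injOn
    (fun p : ℝ => (p : ℂ) ^ (a - 1) * (1 - (p : ℂ)) ^ (b - 1))
  rw [image_logistic, Measure.restrict_univ, ← integral_Ioc_eq_integral_Ioo,
    ← intervalIntegral.integral_of_le zero_le_one] at key
  rw [Complex.betaIntegral, key]
  congr 1
  ext u
  have hE : (0 : ℝ) < 1 + rexp u := by positivity
  have hE_eq : 1 + Complex.exp u = ((1 + rexp u : ℝ) : ℂ) := by push_cast; rfl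
  have hE0 : 1 + Complex.exp u ≠ 0 := by rw [hE_eq]; exact_mod_cast hE.ne'
  have h1 : (logistic u : ℂ) ^ (a - 1) =
      Complex.exp (u * (a - 1)) / (1 + Complex.exp u) ^ (a - 1) := by
    rw [logistic, Complex.ofReal_div, Complex.div_cpow_ofReal_nonneg (exp_pos u).le hE.le,
      ofReal_exp_cpow, hE_eq]
  have h2 : (1 - (logistic u : ℂ)) ^ (b - 1) = ((1 + Complex.exp u) ^ (b - 1))⁻¹ := by
    rw [hE_eq, ← Complex.inv_cpow_ofReal_nonneg hE.le, logistic]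
    congr 1
    push_cast
    field_simp
    ring
  have hpow : (1 + Complex.exp u) ^ (a + b) =
      (1 + Complex.exp u) ^ (a - 1) * (1 + Complex.exp u) ^ (b - 1) * (1 + Complex.exp u) ^ 2 := by
    rw [← Complex.cpow_natCast, ← Complex.cpow_add _ _ hE0, ← Complex.cpow_add _ _ hE0]
    congr 1; push_cast; ring
  have hexp : Complex.exp (a * u) = Complex.exp u * Complex.exp (u * (a - 1)) := by
    rw [← Complex.exp_add]; ring_nf
  rw [h1, h2, abs_of_pos (by positivity), Complex.real_smul, hpow, hexp]
  push_cast
  field_simp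

theorem integral_cexp_mul_div_one_add_exp {a : ℂ} (ha₀ : 0 < a.re) (ha₁ : a.re < 1) :
    ∫ u : ℝ, Complex.exp (a * u) / (1 + Complex.exp u) = π / Complex.sin (π * a) := by
  have hbeta := betaIntegral_eq_integral_exp a (1 - a)
  simp only [add_sub_cancel, Complex.cpow_one] at hbeta
  rw [← hbeta, ← Complex.Gamma_mul_Gamma_one_sub,
    Complex.Gamma_mul_Gamma_eq_betaIntegral ha₀ (by simpa using ha₁), add_sub_cancel,
    Complex.Gamma_one, one_mul]

theorem integral_cexp_mul_I_div_cosh (w : ℝ) {β : ℝ} (hβ : 0 < β) :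
    ∫ t : ℝ, Complex.exp (↑(w * t) * Complex.I) / (cosh (β * t) : ℂ) =
      ((π / (β * cosh (π * w / (2 * β))) : ℝ) : ℂ) := by
  set a : ℂ := 1 / 2 + ↑(w / (2 * β)) * Complex.I
  have hsubst : ∀ t : ℝ, Complex.exp (↑(w * t) * Complex.I) / (cosh (β * t) : ℂ) =
      2 * (Complex.exp (a * ↑(2 * β * t)) / (1 + Complex.exp ↑(2 * β * t))) := by
    intro t
    have hE : Complex.exp ↑(β * t) ≠ 0 := Complex.exp_ne_zero _
    have h2 : Complex.exp ↑(2 * β * t) = Complex.exp ↑(β * t) ^ 2 := by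
      rw [← Complex.exp_nat_mul]; push_cast; ring_nf
    have hexp : Complex.exp (a * ↑(2 * β * t)) =
        Complex.exp ↑(β * t) * Complex.exp (↑(w * t) * Complex.I) := by
      have hβ0 : (β : ℂ) ≠ 0 := by exact_mod_cast hβ.ne'
      rw [← Complex.exp_add]; congr 1; simp only [a]; push_cast; field_simp
    rw [h2, hexp, Real.cosh_eq, exp_neg]
    push_cast at hE ⊢
    field_simp
    ring
  have hsin : Complex.sin (π * a) = cosh (π * w / (2 * β)) := by
    rw [show (π : ℂ) * a = ↑(π * w / (2 * β)) * Complex.I + π / 2 by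
        simp only [a]; push_cast; ring,
      Complex.sin_add_pi_div_two, Complex.cos_mul_I, Complex.ofReal_cosh]
  have ha_re : a.re = 1 / 2 := by
    simp only [a, Complex.add_re, Complex.re_ofReal_mul, Complex.I_re, mul_zero, add_zero]
    norm_num
  simp_rw [hsubst]
  rw [integral_const_mul,
    Measure.integral_comp_mul_left (fun u : ℝ => Complex.exp (a * u) / (1 + Complex.exp u)),
    integral_cexp_mul_div_one_add_exp (by rw [ha_re]; norm_num) (by rw [ha_re]; norm_num), hsin,
    abs_of_pos (by positivity), Complex.real_smul]
  push_cast
  field_simp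

lemma inv_cosh_le (x : ℝ) : (cosh x)⁻¹ ≤ 4 * (1 + x ^ 2)⁻¹ := by
  have hexp := quadratic_le_exp_of_nonneg (abs_nonneg x)
  have hcosh : rexp |x| / 2 ≤ cosh x := by
    rw [← cosh_abs, cosh_eq]
    linarith [exp_pos (-|x|)]
  rw [← div_eq_mul_inv, inv_le_comm₀ (cosh_pos x) (by positivity), inv_div]
  nlinarith [abs_nonneg x, sq_abs x]

lemma integrable_inv_cosh : Integrable fun x : ℝ => (cosh x)⁻¹ := by
  refine (integrable_inv_one_add_sq.const_mul 4).mono' (by fun_prop) (ae_of_all _ fun x => ?_)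
  rw [norm_inv, norm_of_nonneg (cosh_pos x).le]
  exact inv_cosh_le x

lemma integrable_cexp_mul_I_div_cosh (w : ℝ) {β : ℝ} (hβ : β ≠ 0) :
    Integrable fun t : ℝ => Complex.exp (↑(w * t) * Complex.I) / (cosh (β * t) : ℂ) := by
  have hcont : Continuous fun t : ℝ => Complex.exp (↑(w * t) * Complex.I) / (cosh (β * t) : ℂ) :=
    .div (by fun_prop) (by fun_prop) fun t => by exact_mod_cast (cosh_pos _).ne'
  refine (integrable_inv_cosh.comp_mul_left' hβ).mono' hcont.aestronglyMeasurable
    (ae_of_all _ fun t => ?_)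
  rw [norm_div, Complex.norm_exp_ofReal_mul_I, Complex.norm_real, norm_of_nonneg (cosh_pos _).le,
    one_div]

lemma re_cexp_mul_I_div_cosh (w β t : ℝ) :
    (Complex.exp (↑(w * t) * Complex.I) / (cosh (β * t) : ℂ)).re = cos (w * t) / cosh (β * t) := by
  rw [Complex.div_ofReal_re, Complex.exp_ofReal_mul_I_re]

lemma integrable_cos_mul_div_cosh (w : ℝ) {β : ℝ} (hβ : β ≠ 0) :
    Integrable fun t : ℝ => cos (w * t) / cosh (β * t) := by
  simpa only [RCLike.re_to_complex, re_cexp_mul_I_div_cosh] using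
    (integrable_cexp_mul_I_div_cosh w hβ).re

theorem integral_cos_mul_div_cosh (w : ℝ) {β : ℝ} (hβ : 0 < β) :
    ∫ t : ℝ, cos (w * t) / cosh (β * t) = π / (β * cosh (π * w / (2 * β))) := by
  rw [← Complex.ofReal_re (π / _), ← integral_cexp_mul_I_div_cosh w hβ,
    ← RCLike.re_to_complex, ← integral_re (integrable_cexp_mul_I_div_cosh w hβ.ne')]
  simp only [RCLike.re_to_complex, re_cexp_mul_I_div_cosh]

theorem integral_eq_two_smul_integral_Ioi_of_even {E : Type*} [NormedAddCommGroup E]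
    [NormedSpace ℝ E] {f : ℝ → E} (hf : Integrable f) (heven : Function.Even f) :
    ∫ x, f x = (2 : ℝ) • ∫ x in Ioi 0, f x := by
  rw [← intervalIntegral.integral_Iic_add_Ioi hf.integrableOn hf.integrableOn, two_smul]
  congr 1
  simpa only [heven _, neg_zero] using integral_comp_neg_Iic 0 f

theorem stmt_14_general (w β : ℝ) (hβ : 0 < β) :
    ∫ t in Ioi (0 : ℝ), Real.cos (w * t) / Real.cosh (β * t) =
      π / (2 * β * Real.cosh (π * w / (2 * β))) := by
  have h := integral_cos_mul_div_cosh w hβ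
  rw [integral_eq_two_smul_integral_Ioi_of_even (integrable_cos_mul_div_cosh w hβ.ne')
    (fun t => by simp only [mul_neg, cos_neg, cosh_neg]), smul_eq_mul] at h
  rw [mul_assoc, ← div_div, div_right_comm, ← h]
  ring

theorem stmt_14 (w β : ℝ) (hw : 0 ≤ w) (hβ : 0 < β) :
    ∫ t in Ioi (0 : ℝ), Real.cos (w * t) / Real.cosh (β * t) =
      π / (2 * β * Real.cosh (π * w / (2 * β))) :=
  stmt_14_general w β hβ
end
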